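/- arXiv:2104.09110 — 6 statements merged into one kernel-verified Lean document; each statement's English description precedes it below -/
import Mathlib

section
/- Let J be a Euclidean Jordan algebra, c = (c₁,…,c_k) a complete system of orthogonal idempotents, and J(c) the associated subalgebra. Then the set of invertible elements of J(c) equals J(c) ∩ J^×, i.e. an element of J(c) is invertible in J(c) if and only if it is invertible in J. -/
open scoped RealInnerProductSpace

/-- A Euclidean Jordan algebra structure on a finite-dimensional real inner
product space: a commutative bilinear product satisfying the Jordan identity,
with unit `one`, such that the inner product is associative. -/
structure EJA (J : Type) [NormedAddCommGroup J] [InnerProductSpace ℝ J] : Type where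
  mul : J →ₗ[ℝ] J →ₗ[ℝ] J
  comm : ∀ x y : J, mul x y = mul y x
  jordan : ∀ x y : J, mul (mul x y) (mul x x) = mul x (mul y (mul x x))
  one : J
  one_mul : ∀ x : J, mul one x = x
  assoc_inner : ∀ x y z : J, ⟪mul x y, z⟫ = ⟪y, mul x z⟫

variable {J : Type} [NormedAddCommGroup J] [InnerProductSpace ℝ J] [FiniteDimensional ℝ J]

/-- The Peirce `μ`-eigenspace of the idempotent `c`. -/
noncomputable def EJA.peirce (A : EJA J) (c : J) (μ : ℝ) : Submodule ℝ J :=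
  Module.End.eigenspace (A.mul c : Module.End ℝ J) μ

/-- A complete system of orthogonal idempotents. -/
def EJA.IsCSOI (A : EJA J) {k : ℕ} (c : Fin k → J) : Prop :=
  (∀ j, A.mul (c j) (c j) = c j) ∧ (∀ i j, i ≠ j → A.mul (c i) (c j) = 0) ∧
    (∑ j, c j) = A.one

/-- `y` is the Jordan inverse of `x`:  `x∘y = e` and `x²∘y = x`. -/
def EJA.IsInv (A : EJA J) (x y : J) : Prop :=
  A.mul x y = A.one ∧ A.mul (A.mul x x) y = x

/-!
The Peirce rules make `J(c) = ⨁ J(cⱼ,1)` a subalgebra containing `e`, and since the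
multiplication operators are self-adjoint, multiplication by an element of `J(c)` also
preserves `J(c)ᗮ`. So if `y` inverts `x` in `J`, splitting `y` along `J(c) ⊕ J(c)ᗮ` shows
that its `J(c)`-component already satisfies both equations `x ∘ y = e`, `x² ∘ y = x`,
whose right-hand sides lie in `J(c)`.
-/

namespace EJA

variable {E : Type} [NormedAddCommGroup E] [InnerProductSpace ℝ E] (A : EJA E)

theorem jordan_polarized (x y z : E) :
    A.mul (A.mul z y) (A.mul x x) + (2 : ℝ) • A.mul (A.mul x y) (A.mul x z)
      = A.mul z (A.mul y (A.mul x x)) + (2 : ℝ) • A.mul x (A.mul y (A.mul x z)) := by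
  have hplus := A.jordan (x + z) y
  have hminus := A.jordan (x - z) y
  have hz := A.jordan z y
  simp only [map_add, map_sub, LinearMap.add_apply, LinearMap.sub_apply] at hplus hminus
  rw [A.comm z x] at hplus hminus
  linear_combination (norm := module) (2 : ℝ)⁻¹ • hplus - (2 : ℝ)⁻¹ • hminus - hz

theorem mem_peirce_one {d v : E} : v ∈ A.peirce d 1 ↔ A.mul d v = v := by
  rw [peirce, Module.End.mem_eigenspace_iff, one_smul]

theorem mul_mem_peirce_one {d a b : E} (hd : A.mul d d = d) (ha : A.mul d a = a)
    (hb : A.mul d b = b) : A.mul d (A.mul a b) = A.mul a b := by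
  have h := A.jordan_polarized d b a
  rw [hd, hb, ha, A.comm b a, A.comm b d, hb, A.comm (A.mul a b) d] at h
  linear_combination (norm := module) -h

theorem mul_eq_zero_of_peirce_zero_of_peirce_one {d a b : E} (hd : A.mul d d = d)
    (ha : A.mul d a = 0) (hb : A.mul d b = b) : A.mul a b = 0 := by
  have h₁ := A.jordan_polarized d a b
  rw [hd, ha, hb, A.comm a d, ha, A.comm b a, A.comm (A.mul a b) d] at h₁
  simp only [map_zero, LinearMap.zero_apply, smul_zero, add_zero, zero_add] at h₁
  have hdab : A.mul d (A.mul a b) = 0 := by linear_combination (norm := module) -h₁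
  have h₂ := A.jordan_polarized d b a
  rw [hd, hb, ha, A.comm b d, hb, A.comm (A.mul a b) d, hdab] at h₂
  simp only [map_zero, smul_zero, add_zero] at h₂
  exact h₂.symm

theorem mul_eq_zero_of_orthogonal_of_peirce_one {d f a : E} (hd : A.mul d d = d)
    (hf : A.mul f f = f) (hdf : A.mul d f = 0) (ha : A.mul d a = a) : A.mul f a = 0 := by
  have hfd : A.mul f d = 0 := by rw [A.comm, hdf]
  have h₁ := A.jordan_polarized d f a
  rw [hd, hdf, ha, hfd, A.comm a f, A.comm (A.mul f a) d] at h₁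
  simp only [map_zero, LinearMap.zero_apply, smul_zero, add_zero, zero_add] at h₁
  have hdfa : A.mul d (A.mul f a) = 0 := by linear_combination (norm := module) -h₁
  have h₂ := A.jordan_polarized f d a
  rw [hf, hfd, hdf, A.comm a d, ha, hdfa, map_zero] at h₂
  simp only [map_zero, LinearMap.zero_apply, smul_zero, add_zero] at h₂
  rwa [A.comm f a]

theorem mul_eq_zero_of_mem_peirce_one_of_orthogonal {d f a b : E} (hd : A.mul d d = d)
    (hf : A.mul f f = f) (hdf : A.mul d f = 0) (ha : a ∈ A.peirce d 1)
    (hb : b ∈ A.peirce f 1) : A.mul a b = 0 := by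
  rw [mem_peirce_one] at ha hb
  exact A.mul_eq_zero_of_peirce_zero_of_peirce_one hf
    (A.mul_eq_zero_of_orthogonal_of_peirce_one hd hf hdf ha) hb

theorem mul_mem_iSup_peirce_one {ι : Type*} {c : ι → E}
    (hid : ∀ j, A.mul (c j) (c j) = c j) (horth : ∀ i j, i ≠ j → A.mul (c i) (c j) = 0)
    {a b : E} (ha : a ∈ ⨆ j, A.peirce (c j) 1) (hb : b ∈ ⨆ j, A.peirce (c j) 1) :
    A.mul a b ∈ ⨆ j, A.peirce (c j) 1 := by
  refine Submodule.map₂_le.mp ?_ a ha b hb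
  simp only [Submodule.map₂_iSup_left, Submodule.map₂_iSup_right]
  refine iSup_le fun j => iSup_le fun i => Submodule.map₂_le.mpr fun u hu v hv => ?_
  obtain rfl | hij := eq_or_ne i j
  · exact Submodule.mem_iSup_of_mem i <| A.mem_peirce_one.2 <|
      A.mul_mem_peirce_one (hid i) (A.mem_peirce_one.1 hu) (A.mem_peirce_one.1 hv)
  · rw [A.mul_eq_zero_of_mem_peirce_one_of_orthogonal (hid i) (hid j) (horth i j hij) hu hv]
    exact zero_mem _

theorem one_mem_iSup_peirce_one {k : ℕ} {c : Fin k → E} (hc : A.IsCSOI c) :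
    A.one ∈ ⨆ j, A.peirce (c j) 1 := by
  rw [← hc.2.2]
  exact sum_mem fun j _ => Submodule.mem_iSup_of_mem j (A.mem_peirce_one.2 (hc.1 j))

section Subalgebra

variable {A} {V : Submodule ℝ E}

theorem mul_mem_orthogonal (hV : ∀ a ∈ V, ∀ b ∈ V, A.mul a b ∈ V) {w u : E} (hw : w ∈ V)
    (hu : u ∈ Vᗮ) : A.mul w u ∈ Vᗮ := by
  rw [Submodule.mem_orthogonal]
  intro v hv
  rw [real_inner_comm, A.assoc_inner, real_inner_comm]
  exact hu _ (hV w hw v hv)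

theorem mul_starProjection_eq [V.HasOrthogonalProjection]
    (hV : ∀ a ∈ V, ∀ b ∈ V, A.mul a b ∈ V) {w y : E} (hw : w ∈ V)
    (hwy : A.mul w y ∈ V) : A.mul w (V.starProjection y) = A.mul w y := by
  have hperp : A.mul w (y - V.starProjection y) ∈ Vᗮ :=
    mul_mem_orthogonal hV hw (V.sub_starProjection_mem_orthogonal y)
  have hmem : A.mul w (y - V.starProjection y) ∈ V := by
    rw [map_sub]
    exact sub_mem hwy (hV w hw _ (V.starProjection_apply_mem y))
  have hzero : A.mul w (y - V.starProjection y) = 0 :=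
    (Submodule.mem_bot ℝ).mp (V.orthogonal_disjoint.le_bot ⟨hmem, hperp⟩)
  rwa [map_sub, sub_eq_zero, eq_comm] at hzero

end Subalgebra

end EJA

/-- An element of the subalgebra `J(c)` associated to a CSOI is invertible in
`J(c)` (whose unit is `e`) iff it is invertible in `J`. -/
theorem stmt2 (A : EJA J) (k : ℕ) (c : Fin k → J) (hc : A.IsCSOI c)
    (x : J) (hx : x ∈ ⨆ j, A.peirce (c j) 1) :
    (∃ y ∈ ⨆ j, A.peirce (c j) 1, A.IsInv x y) ↔ (∃ y, A.IsInv x y) := by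
  set V := ⨆ j, A.peirce (c j) 1
  have hV : ∀ a ∈ V, ∀ b ∈ V, A.mul a b ∈ V := fun a ha b hb =>
    A.mul_mem_iSup_peirce_one hc.1 hc.2.1 ha hb
  refine ⟨fun ⟨y, _, hy⟩ => ⟨y, hy⟩, fun ⟨y, hxy, hx2y⟩ => ?_⟩
  refine ⟨V.starProjection y, V.starProjection_apply_mem y, ?_, ?_⟩
  · rw [EJA.mul_starProjection_eq hV hx (by rw [hxy]; exact A.one_mem_iSup_peirce_one hc), hxy]
  · rw [EJA.mul_starProjection_eq hV (hV x hx x hx) (by rwa [hx2y]), hx2y]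
end

section
/- Let J be a Euclidean Jordan algebra and c a CSOI. The subgroup Str(c) = {ℓ ∈ Str(J) : ℓ(J(c)) = J(c)} of the structure group is stable under the Cartan involution ℓ ↦ (ℓᵗ)⁻¹. -/
/-!
Write `m = (ℓᵗ)⁻¹`. Then `(mᵗ)⁻¹ = ℓ`, so the defining identity of `Str(J)` for `ℓ`, read with the
roles of `x` and `x⁻¹` exchanged, is the defining identity for `m`.

For the second claim, `J(c) = ⊕ J₁(cⱼ)` is a unital subalgebra, and a unital subalgebra `S` of a
Euclidean Jordan algebra is closed under inversion: `S` and `Sᗮ` are both stable under the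
multiplication operators of `S`, so the `Sᗮ`-component of an inverse of `x ∈ S` is killed by `x`
and `x²`, and the `S`-component is already an inverse. Hence for invertible `v ∈ J(c)`,
`m v = (ℓ v⁻¹)⁻¹ ∈ J(c)`. Since `J(c)` is spanned by its invertible elements
(`a = t e - (t e - a)` for `t` outside the spectrum of `L a`), `m` maps `J(c)` into, hence onto,
itself.

The one nontrivial identity of Jordan algebras needed is that `L x` and `L x⁻¹` commute. It follows
from the linearized Jordan identity, which gives `[L x², L y²] = 2 [L x, L y]` and `[L x², L y] = 0`
for `y = x⁻¹`: the skew-adjoint operator `D = [L x, L y]` then satisfies `tr (D D) = 0`, so `D = 0`.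
-/

open scoped RealInnerProductSpace

variable {J : Type} [NormedAddCommGroup J] [InnerProductSpace ℝ J] [FiniteDimensional ℝ J]

/-- `ℓ` belongs to the structure group: it preserves invertible elements and
`(ℓx)⁻¹ = (ℓᵗ)⁻¹ x⁻¹` (here `(ℓᵗ)⁻¹ = (ℓ⁻¹)ᵗ` is the adjoint of `ℓ⁻¹`). -/
def EJA.InStr (A : EJA J) (ℓ : J ≃ₗ[ℝ] J) : Prop :=
  ∀ x y : J, A.IsInv x y →
    A.IsInv (ℓ x) (LinearMap.adjoint ℓ.symm.toLinearMap y)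

lemma LinearMap.trace_commutator_mul_eq_zero {R M : Type*} [CommRing R] [AddCommGroup M]
    [Module R M] [Module.Free R M] [Module.Finite R M] {S D : Module.End R M}
    (T : Module.End R M) (h : Commute S D) :
    LinearMap.trace R M ((S * T - T * S) * D) = 0 := by
  rw [sub_mul, map_sub, mul_assoc, LinearMap.trace_mul_comm R S, mul_assoc, ← h.eq,
    ← mul_assoc, sub_self]

lemma LinearMap.eq_zero_of_trace_adjoint_comp_self_eq_zero {𝕜 E : Type*} [RCLike 𝕜]
    [NormedAddCommGroup E] [InnerProductSpace 𝕜 E] [FiniteDimensional 𝕜 E] {f : E →ₗ[𝕜] E}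
    (h : (LinearMap.adjoint f ∘ₗ f).trace 𝕜 E = 0) : f = 0 := by
  let b := stdOrthonormalBasis 𝕜 E
  have hsum : ∑ i, ‖f (b i)‖ ^ 2 = 0 := by
    rw [LinearMap.trace_eq_sum_inner _ b] at h
    simp_rw [LinearMap.comp_apply, LinearMap.adjoint_inner_right,
      inner_self_eq_norm_sq_to_K] at h
    exact_mod_cast h
  have hb : ∀ i, f (b i) = 0 := fun i =>
    norm_eq_zero.mp <| pow_eq_zero_iff two_ne_zero |>.mp <|
      (Finset.sum_eq_zero_iff_of_nonneg fun i _ => by positivity).mp hsum i (Finset.mem_univ i)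
  exact b.toBasis.ext fun i => by simpa using hb i

lemma LinearEquiv.adjoint_symm_eq_of_eq_adjoint_symm {𝕜 E : Type*} [RCLike 𝕜]
    [NormedAddCommGroup E] [InnerProductSpace 𝕜 E] [FiniteDimensional 𝕜 E] {ℓ m : E ≃ₗ[𝕜] E}
    (hm : m.toLinearMap = LinearMap.adjoint ℓ.symm.toLinearMap) :
    LinearMap.adjoint m.symm.toLinearMap = ℓ.toLinearMap := by
  refine ((LinearMap.eq_adjoint_iff _ _).mpr fun x y => ?_).symm
  obtain ⟨u, rfl⟩ := m.surjective y
  rw [coe_coe, coe_coe, symm_apply_apply, ← coe_coe m, hm, LinearMap.adjoint_inner_right,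
    coe_coe, symm_apply_apply]

namespace EJA

variable {E : Type} [NormedAddCommGroup E] [InnerProductSpace ℝ E] (A : EJA E)

def L (x : E) : Module.End ℝ E := A.mul x

@[simp] lemma L_apply (x z : E) : A.L x z = A.mul x z := rfl

lemma mul_one (x : E) : A.mul x A.one = x := by
  rw [A.comm, A.one_mul]

lemma commute_L_mul_self (x : E) : Commute (A.L (A.mul x x)) (A.L x) :=
  LinearMap.ext fun z => by
    change A.mul (A.mul x x) (A.mul x z) = A.mul x (A.mul (A.mul x x) z)
    rw [A.comm (A.mul x x), A.comm (A.mul x x) z]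
    exact A.jordan x z

lemma jordan_linearized (a b z : E) :
    (2 : ℝ) • A.mul (A.mul a b) (A.mul a z) + A.mul (A.mul a a) (A.mul b z) =
      (2 : ℝ) • A.mul a (A.mul (A.mul a b) z) + A.mul b (A.mul (A.mul a a) z) := by
  have jordan_op (x : E) := LinearMap.congr_fun (A.commute_L_mul_self x).eq z
  have hp := jordan_op (a + b)
  have hm := jordan_op (a - b)
  have hb := jordan_op b
  simp only [Module.End.mul_apply, L_apply, map_add, map_sub, LinearMap.add_apply,
    LinearMap.sub_apply, A.comm b a] at hp hm hb
  linear_combination (norm := module) (2⁻¹ : ℝ) • hp - (2⁻¹ : ℝ) • hm - hb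

lemma adjoint_L [FiniteDimensional ℝ E] (x : E) : LinearMap.adjoint (A.L x) = A.L x :=
  ((LinearMap.eq_adjoint_iff _ _).mpr fun u v => A.assoc_inner x u v).symm

lemma commute_L_mul_self_of_mul_eq_one {x y : E} (h : A.mul x y = A.one) :
    Commute (A.L (A.mul x x)) (A.L y) :=
  LinearMap.ext fun z => by
    have hl := A.jordan_linearized x y z
    rw [h, A.one_mul, A.one_mul] at hl
    exact add_left_cancel hl

lemma commute_L_of_isInv [FiniteDimensional ℝ E] {x y : E} (h : A.IsInv x y) :
    Commute (A.L x) (A.L y) := by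
  set D := A.L x * A.L y - A.L y * A.L x with hD
  have hbracket : A.L (A.mul x x) * A.L (A.mul y y) - A.L (A.mul y y) * A.L (A.mul x x) =
      (2 : ℝ) • D := LinearMap.ext fun z => by
    have hl := A.jordan_linearized y (A.mul x x) z
    rw [A.comm y (A.mul x x), h.2] at hl
    simp only [D, LinearMap.sub_apply, LinearMap.smul_apply, Module.End.mul_apply, L_apply]
    linear_combination (norm := module) -hl
  have hxy := A.commute_L_mul_self_of_mul_eq_one h.1
  have hxx := A.commute_L_mul_self x
  have htrace : LinearMap.trace ℝ E (D * D) = 0 := by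
    have := LinearMap.trace_commutator_mul_eq_zero (A.L (A.mul y y))
      ((hxx.mul_right hxy).sub_right (hxy.mul_right hxx))
    rw [← hD, hbracket, smul_mul_assoc, map_smul, smul_eq_mul] at this
    simpa using this
  have hskew : LinearMap.adjoint D = -D := by
    simp only [D, map_sub, Module.End.mul_eq_comp, LinearMap.adjoint_comp, adjoint_L, neg_sub]
  refine sub_eq_zero.mp (LinearMap.eq_zero_of_trace_adjoint_comp_self_eq_zero ?_)
  rw [← hD, hskew, LinearMap.neg_comp, map_neg, ← Module.End.mul_eq_comp, htrace, neg_zero]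

lemma mul_left_comm_of_commute_L {x y : E} (h : Commute (A.L x) (A.L y)) (z : E) :
    A.mul x (A.mul y z) = A.mul y (A.mul x z) :=
  LinearMap.congr_fun h.eq z

lemma mul_left_comm_of_isInv [FiniteDimensional ℝ E] {x y : E} (h : A.IsInv x y) (z : E) :
    A.mul x (A.mul y z) = A.mul y (A.mul x z) :=
  A.mul_left_comm_of_commute_L (A.commute_L_of_isInv h) z

lemma IsInv.symm [FiniteDimensional ℝ E] {A : EJA E} {x y : E} (h : A.IsInv x y) :
    A.IsInv y x := by
  refine ⟨by rw [A.comm, h.1], ?_⟩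
  rw [A.comm _ x, A.mul_left_comm_of_isInv h, h.1, A.mul_one]

lemma IsInv.unique [FiniteDimensional ℝ E] {A : EJA E} {x y y' : E} (h : A.IsInv x y)
    (h' : A.IsInv x y') : y = y' :=
  calc y = A.mul y (A.mul x y') := by rw [h'.1, A.mul_one]
    _ = A.mul y' (A.mul x y) := by
      rw [← A.mul_left_comm_of_isInv h, A.comm y y', A.mul_left_comm_of_isInv h']
    _ = y' := by rw [h.1, A.mul_one]

lemma isInv_one : A.IsInv A.one A.one :=
  ⟨A.one_mul _, by rw [A.one_mul, A.one_mul]⟩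

lemma exists_isInv_of_bijective_L {x : E} (hx : Function.Bijective (A.L x)) :
    ∃ y, A.IsInv x y := by
  obtain ⟨y, hy⟩ := hx.2 A.one
  refine ⟨y, hy, hx.1 ?_⟩
  have := LinearMap.congr_fun (A.commute_L_mul_self x) y
  simp only [Module.End.mul_apply, L_apply] at this hy ⊢
  rw [← this, hy, A.mul_one]

lemma exists_isInv_smul_one_sub [FiniteDimensional ℝ E] (a : E) :
    ∃ t : ℝ, ∃ y, A.IsInv (t • A.one - a) y := by
  obtain ⟨t, ht⟩ := (Module.End.finite_spectrum (A.L a)).infinite_compl.nonempty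
  refine ⟨t, A.exists_isInv_of_bijective_L ?_⟩
  have hL : A.L (t • A.one - a) = algebraMap ℝ (Module.End ℝ E) t - A.L a := by
    ext z; simp [L, A.one_mul, Algebra.algebraMap_eq_smul_one]
  rw [hL, ← Module.End.isUnit_iff]
  exact spectrum.notMem_iff.mp ht

lemma mem_peirce_iff [FiniteDimensional ℝ E] {c x : E} {μ : ℝ} :
    x ∈ A.peirce c μ ↔ A.mul c x = μ • x :=
  Module.End.mem_eigenspace_iff

lemma commute_L_of_mem_peirce [FiniteDimensional ℝ E] {c a : E} {μ : ℝ} (hc : A.mul c c = c)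
    (ha : a ∈ A.peirce c μ) (hμ : 2 * μ ≠ 1) : Commute (A.L c) (A.L a) :=
  LinearMap.ext fun z => by
    have hl := A.jordan_linearized c a z
    rw [A.mem_peirce_iff.mp ha, hc] at hl
    simp only [map_smul, LinearMap.smul_apply, smul_smul] at hl
    have h : (1 - 2 * μ) • (A.mul c (A.mul a z) - A.mul a (A.mul c z)) = 0 := by
      linear_combination (norm := module) hl
    exact sub_eq_zero.mp ((smul_eq_zero.mp h).resolve_left (sub_ne_zero.mpr hμ.symm))

/-- The minimal polynomial of `L c` divides `X (2X - 1) (X - 1)`. -/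
lemma idempotent_cubic {c : E} (hc : A.mul c c = c) (w : E) :
    (2 : ℝ) • A.mul c (A.mul c (A.mul c w)) + A.mul c w = (3 : ℝ) • A.mul c (A.mul c w) := by
  have hl := A.jordan_linearized c w c
  rw [hc, hc, A.comm (A.mul c w) c, A.comm w c] at hl
  linear_combination (norm := module) -hl

lemma mul_eq_zero_of_orthogonal_of_mem_peirce_one [FiniteDimensional ℝ E] {c d b : E}
    (hc : A.mul c c = c) (hd : A.mul d d = d) (hcd : A.mul c d = 0) (hb : b ∈ A.peirce d 1) :
    A.mul c b = 0 := by
  rw [A.mem_peirce_iff, one_smul] at hb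
  have hdc : Commute (A.L d) (A.L c) :=
    A.commute_L_of_mem_peirce hd (by rw [A.mem_peirce_iff, A.comm, hcd, zero_smul]) (by norm_num)
  have h1 : A.mul d (A.mul c b) = A.mul c b := by rw [A.mul_left_comm_of_commute_L hdc, hb]
  have h2 : A.mul d (A.mul c (A.mul c b)) = A.mul c (A.mul c b) := by
    rw [A.mul_left_comm_of_commute_L hdc, h1]
  have hsum : A.mul (c + d) (c + d) = c + d := by
    simp only [map_add, LinearMap.add_apply, hc, hd, hcd, A.comm d c, add_zero, zero_add]
  -- `L d` is the identity on `b, c b, c (c b)`, so `L (c + d) = L c + 1` there.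
  have cubic_c := A.idempotent_cubic hc b
  have cubic_cd := A.idempotent_cubic hsum b
  simp only [map_add, LinearMap.add_apply, hb, h1, h2] at cubic_cd
  have hccb : A.mul c (A.mul c b) = 0 := by
    have h6 : (6 : ℝ) • A.mul c (A.mul c b) = 0 := by
      linear_combination (norm := module) cubic_cd - cubic_c
    exact (smul_eq_zero.mp h6).resolve_left (by norm_num)
  simpa [hccb] using cubic_c

lemma InStr.of_eq_adjoint_symm [FiniteDimensional ℝ E] {A : EJA E} {ℓ m : E ≃ₗ[ℝ] E}
    (hℓ : A.InStr ℓ) (hm : m.toLinearMap = LinearMap.adjoint ℓ.symm.toLinearMap) :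
    A.InStr m := by
  intro x y hxy
  rw [LinearEquiv.adjoint_symm_eq_of_eq_adjoint_symm hm, LinearEquiv.coe_coe]
  have hℓy := hℓ y x hxy.symm
  rw [← LinearMap.congr_fun hm x, LinearEquiv.coe_coe] at hℓy
  exact hℓy.symm

structure IsSubalgebra (S : Submodule ℝ E) : Prop where
  one_mem : A.one ∈ S
  mul_mem : ∀ x ∈ S, ∀ y ∈ S, A.mul x y ∈ S

namespace IsSubalgebra

variable {A} {S : Submodule ℝ E} (hS : A.IsSubalgebra S)
include hS

lemma mul_mem_orthogonal {x u : E} (hx : x ∈ S) (hu : u ∈ Sᗮ) : A.mul x u ∈ Sᗮ :=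
  (Submodule.mem_orthogonal' _ _).mpr fun v hv => by
    rw [A.assoc_inner]
    exact (Submodule.mem_orthogonal' _ _).mp hu _ (hS.mul_mem x hx v hv)

lemma inv_mem [FiniteDimensional ℝ E] {x y : E} (hx : x ∈ S) (hxy : A.IsInv x y) : y ∈ S := by
  obtain ⟨y₀, hy₀, y₁, hy₁, rfl⟩ := Submodule.exists_add_mem_mem_orthogonal (K := S) y
  have mul_eq_zero {z : E} (hz : z ∈ S) (hzy : A.mul z (y₀ + y₁) ∈ S) : A.mul z y₁ = 0 := by
    have h := S.sub_mem hzy (hS.mul_mem z hz y₀ hy₀)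
    rw [map_add, add_sub_cancel_left] at h
    exact Submodule.disjoint_def.mp S.orthogonal_disjoint _ h (hS.mul_mem_orthogonal hz hy₁)
  have h₁ := mul_eq_zero hx (by rw [hxy.1]; exact hS.one_mem)
  have h₂ := mul_eq_zero (hS.mul_mem x hx x hx) (by rw [hxy.2]; exact hx)
  have hinv : A.IsInv x y₀ :=
    ⟨by simpa only [map_add, h₁, add_zero] using hxy.1,
      by simpa only [map_add, h₂, add_zero] using hxy.2⟩
  rw [hxy.unique hinv]
  exact hy₀

lemma map_eq_of_eq_adjoint_symm [FiniteDimensional ℝ E] {ℓ m : E ≃ₗ[ℝ] E} (hℓ : A.InStr ℓ)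
    (hmap : S.map ℓ.toLinearMap = S) (hm : m.toLinearMap = LinearMap.adjoint ℓ.symm.toLinearMap) :
    S.map m.toLinearMap = S := by
  have mem_of_isInv {v w : E} (hv : v ∈ S) (hvw : A.IsInv v w) : m v ∈ S := by
    have hℓw : ℓ w ∈ S := hmap ▸ Submodule.mem_map_of_mem (hS.inv_mem hv hvw)
    have hinv := hℓ w v hvw.symm
    rw [← LinearMap.congr_fun hm v, LinearEquiv.coe_coe] at hinv
    exact hS.inv_mem hℓw hinv
  have mem (a : E) (ha : a ∈ S) : m a ∈ S := by
    obtain ⟨t, y, hy⟩ := A.exists_isInv_smul_one_sub a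
    have hone := mem_of_isInv hS.one_mem A.isInv_one
    have hta := mem_of_isInv (S.sub_mem (S.smul_mem t hS.one_mem) ha) hy
    have ha' : m a = t • m A.one - m (t • A.one - a) := by
      rw [map_sub, map_smul, sub_sub_cancel]
    rw [ha']
    exact S.sub_mem (S.smul_mem t hone) hta
  refine Submodule.eq_of_le_of_finrank_le (Submodule.map_le_iff_le_comap.mpr mem) ?_
  rw [LinearEquiv.finrank_map_eq]

end IsSubalgebra

namespace IsCSOI

variable [FiniteDimensional ℝ E] {A} {k : ℕ} {c : Fin k → E} (hc : A.IsCSOI c)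
include hc

lemma mul_eq_zero_of_ne {i j : Fin k} (hij : i ≠ j) {b : E} (hb : b ∈ A.peirce (c j) 1) :
    A.mul (c i) b = 0 :=
  A.mul_eq_zero_of_orthogonal_of_mem_peirce_one (hc.1 i) (hc.1 j) (hc.2.1 i j hij) hb

lemma commute_L {j : Fin k} {b : E} (hb : b ∈ A.peirce (c j) 1) (l : Fin k) :
    Commute (A.L (c l)) (A.L b) := by
  by_cases hlj : l = j
  · subst hlj
    exact A.commute_L_of_mem_peirce (hc.1 l) hb (by norm_num)
  · refine A.commute_L_of_mem_peirce (μ := 0) (hc.1 l) ?_ (by norm_num)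
    rw [A.mem_peirce_iff, zero_smul, hc.mul_eq_zero_of_ne hlj hb]

lemma mul_eq_zero_of_mem_peirce_one {i j : Fin k} (hij : i ≠ j) {a b : E}
    (ha : a ∈ A.peirce (c i) 1) (hb : b ∈ A.peirce (c j) 1) : A.mul a b = 0 := by
  have hl (l : Fin k) : A.mul (c l) (A.mul a b) = 0 := by
    by_cases hli : l = i
    · subst hli
      rw [A.mul_left_comm_of_commute_L (hc.commute_L ha l), hc.mul_eq_zero_of_ne hij hb, map_zero]
    · rw [A.comm a b, A.mul_left_comm_of_commute_L (hc.commute_L hb l),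
        hc.mul_eq_zero_of_ne hli ha, map_zero]
  rw [← A.one_mul (A.mul a b), ← hc.2.2, map_sum, LinearMap.sum_apply]
  exact Finset.sum_eq_zero fun l _ => hl l

lemma mul_mem_peirce_one {i : Fin k} {a b : E} (ha : a ∈ A.peirce (c i) 1)
    (hb : b ∈ A.peirce (c i) 1) : A.mul a b ∈ A.peirce (c i) 1 := by
  rw [A.mem_peirce_iff, one_smul] at hb ⊢
  rw [A.mul_left_comm_of_commute_L (hc.commute_L ha i), hb]

lemma isSubalgebra_iSup_peirce_one : A.IsSubalgebra (⨆ j, A.peirce (c j) 1) where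
  one_mem := by
    rw [← hc.2.2]
    exact Submodule.sum_mem _ fun j _ =>
      Submodule.mem_iSup_of_mem j (by rw [A.mem_peirce_iff, one_smul, hc.1 j])
  mul_mem := by
    rw [← Submodule.map₂_le, Submodule.map₂_iSup_left, iSup_le_iff]
    intro i
    rw [Submodule.map₂_iSup_right, iSup_le_iff]
    intro j
    rw [Submodule.map₂_le]
    intro a ha b hb
    by_cases hij : i = j
    · subst hij
      exact Submodule.mem_iSup_of_mem i (hc.mul_mem_peirce_one ha hb)
    · rw [hc.mul_eq_zero_of_mem_peirce_one hij ha hb]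
      exact Submodule.zero_mem _

end IsCSOI

end EJA

/-- `Str(c)` is stable under the Cartan involution `ℓ ↦ (ℓᵗ)⁻¹`: if `ℓ` is in
the structure group and preserves `J(c)`, then so does `m = (ℓᵗ)⁻¹`. -/
theorem stmt3 (A : EJA J) (k : ℕ) (c : Fin k → J) (hc : A.IsCSOI c)
    (ℓ : J ≃ₗ[ℝ] J) (hℓ : A.InStr ℓ)
    (hmap : (⨆ j, A.peirce (c j) 1).map ℓ.toLinearMap = ⨆ j, A.peirce (c j) 1)
    (m : J ≃ₗ[ℝ] J) (hm : m.toLinearMap = LinearMap.adjoint ℓ.symm.toLinearMap) :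
    A.InStr m ∧ (⨆ j, A.peirce (c j) 1).map m.toLinearMap = ⨆ j, A.peirce (c j) 1 :=
  ⟨hℓ.of_eq_adjoint_symm hm, hc.isSubalgebra_iSup_peirce_one.map_eq_of_eq_adjoint_symm hℓ hmap hm⟩
end

section
/- Let (E, Φ) be a representation of a Euclidean Jordan algebra J, c = (c₁,…,c_k) a CSOI, and E = ⊕_j E_j the decomposition with E_j = Φ(c_j)E. For j fixed and x ∈ J_j = J(c_j,1): (i) Φ(x)E_i = 0 for i ≠ j; (ii) Φ(x)E_j ⊆ E_j; and (iii) x ↦ Φ(x)|_{E_j} is a representation of the Jordan algebra J_j on E_j. -/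
/-!
Everything follows from one observation about endomorphisms: if `P` is idempotent and
`P T + T P = 2 T`, then `T` kills `ker P` and maps the fixed space of `P` into itself.
Jordan multiplicativity of `Φ` makes `P = Φ(c_j)` idempotent and gives `P Φ(x) + Φ(x) P = 2 Φ(x)`
for `x ∈ J_j`; it also gives `Φ(c_i) Φ(c_j) + Φ(c_j) Φ(c_i) = 2 Φ(c_i ∘ c_j) = 0`, which
forces `E_i ⊆ ker Φ(c_j)` for `i ≠ j`.
-/

open scoped RealInnerProductSpace

variable {J : Type} [NormedAddCommGroup J] [InnerProductSpace ℝ J] [FiniteDimensional ℝ J]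

variable {E : Type} [NormedAddCommGroup E] [InnerProductSpace ℝ E] [FiniteDimensional ℝ E]

/-- A representation of the Euclidean Jordan algebra `J` on the Euclidean
space `E`: a unital Jordan algebra morphism into symmetric endomorphisms. -/
def EJA.IsRep (A : EJA J) (Φ : J →ₗ[ℝ] E →ₗ[ℝ] E) : Prop :=
  (∀ (x : J) (ξ η : E), ⟪Φ x ξ, η⟫ = ⟪ξ, Φ x η⟫) ∧
  (∀ x y : J, Φ (A.mul x y) = (2 : ℝ)⁻¹ • (Φ x ∘ₗ Φ y + Φ y ∘ₗ Φ x)) ∧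
  Φ A.one = LinearMap.id

/-- The subspace `E_j`: the `1`-eigenspace of the projection `Φ(c_j)`. -/
noncomputable def EJA.repSpace (A : EJA J) (Φ : J →ₗ[ℝ] E →ₗ[ℝ] E)
    {k : ℕ} (c : Fin k → J) (j : Fin k) : Submodule ℝ E :=
  Module.End.eigenspace (Φ (c j) : Module.End ℝ E) 1

section Endomorphisms

variable {R M : Type*} [Semiring R] [AddCommGroup M] [Module R M] {P T : Module.End R M} {ξ : M}

theorem Module.End.apply_fixed_of_mul_add_mul_eq_two_nsmul (hT : P * T + T * P = 2 • T)
    (hξ : P ξ = ξ) : P (T ξ) = T ξ := by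
  have h := congrArg (fun S : Module.End R M => S ξ) hT
  simp only [LinearMap.add_apply, Module.End.mul_apply, hξ, two_nsmul] at h
  exact add_right_cancel h

theorem Module.End.apply_eq_zero_of_mul_add_mul_eq_two_nsmul [IsAddTorsionFree M]
    (hP : IsIdempotentElem P) (hT : P * T + T * P = 2 • T) (hξ : P ξ = 0) : T ξ = 0 := by
  have h := congrArg (fun S : Module.End R M => S ξ) hT
  simp only [LinearMap.add_apply, Module.End.mul_apply, hξ, map_zero, add_zero,
    LinearMap.smul_apply] at h
  have hPT : P (T ξ) = 0 := by
    have h' := congrArg P h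
    rw [← Module.End.mul_apply, hP.eq, map_nsmul, two_nsmul] at h'
    exact left_eq_add.mp h'
  rwa [hPT, eq_comm, two_nsmul_eq_zero] at h

theorem Module.End.apply_eq_zero_of_mul_add_mul_eq_zero [IsAddTorsionFree M]
    (hP : IsIdempotentElem P) (hPT : P * T + T * P = 0) (hξ : P ξ = ξ) : T ξ = 0 := by
  have h := congrArg (fun S : Module.End R M => S ξ) hPT
  simp only [LinearMap.add_apply, Module.End.mul_apply, hξ, LinearMap.zero_apply] at h
  have hPTξ : P (T ξ) = 0 := by
    have h' := congrArg P h
    rw [map_add, ← Module.End.mul_apply P P, hP.eq, map_zero, ← two_nsmul] at h'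
    exact two_nsmul_eq_zero.mp h'
  rwa [hPTξ, zero_add] at h

end Endomorphisms

namespace EJA

variable {J E : Type} [NormedAddCommGroup J] [InnerProductSpace ℝ J] [NormedAddCommGroup E]
  [InnerProductSpace ℝ E] {A : EJA J}

theorem mem_peirce_one_s11 {c x : J} : x ∈ A.peirce c 1 ↔ A.mul c x = x := by
  simp [peirce]

theorem mem_repSpace {Φ : J →ₗ[ℝ] E →ₗ[ℝ] E} {k : ℕ} {c : Fin k → J} {j : Fin k} {ξ : E} :
    ξ ∈ A.repSpace Φ c j ↔ Φ (c j) ξ = ξ := by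
  simp [repSpace]

namespace IsRep

variable {Φ : J →ₗ[ℝ] E →ₗ[ℝ] E}

theorem apply_mul (hΦ : A.IsRep Φ) (x y : J) (ξ : E) :
    Φ (A.mul x y) ξ = (2 : ℝ)⁻¹ • (Φ x (Φ y ξ) + Φ y (Φ x ξ)) := by
  simp [hΦ.2.1 x y]

theorem mul_add_mul (hΦ : A.IsRep Φ) (x y : J) :
    Φ x * Φ y + Φ y * Φ x = 2 • Φ (A.mul x y) := by
  ext ξ
  rw [LinearMap.smul_apply, hΦ.apply_mul, two_nsmul, ← two_smul ℝ, smul_smul]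
  norm_num

theorem isIdempotentElem (hΦ : A.IsRep Φ) {c : J} (hc : A.mul c c = c) :
    IsIdempotentElem (Φ c) := by
  ext ξ
  have h := hΦ.apply_mul c c ξ
  rw [hc, ← two_smul ℝ, smul_smul] at h
  norm_num at h
  exact h.symm

end IsRep

end EJA

/-- For `x ∈ J_j = J(c_j,1)`: `Φ(x)` kills `E_i` for `i ≠ j`, preserves `E_j`,
and `x ↦ Φ(x)|_{E_j}` is a (unital, Jordan) representation of `J_j` on `E_j`. -/
theorem stmt11 (A : EJA J) (Φ : J →ₗ[ℝ] E →ₗ[ℝ] E) (hΦ : A.IsRep Φ)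
    (k : ℕ) (c : Fin k → J) (hc : A.IsCSOI c)
    (j : Fin k) (x : J) (hx : x ∈ A.peirce (c j) 1) :
    (∀ i, i ≠ j → ∀ ξ ∈ A.repSpace Φ c i, Φ x ξ = 0) ∧
    (∀ ξ ∈ A.repSpace Φ c j, Φ x ξ ∈ A.repSpace Φ c j) ∧
    (∀ ξ ∈ A.repSpace Φ c j, Φ (c j) ξ = ξ) ∧
    (∀ x' ∈ A.peirce (c j) 1, ∀ ξ ∈ A.repSpace Φ c j,
      Φ (A.mul x x') ξ = (2 : ℝ)⁻¹ • (Φ x (Φ x' ξ) + Φ x' (Φ x ξ))) := by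
  obtain ⟨hidem, horth, -⟩ := hc
  have : IsAddTorsionFree E := .of_isTorsionFree ℝ E
  have hx_peirce : Φ (c j) * Φ x + Φ x * Φ (c j) = 2 • Φ x := by
    rw [hΦ.mul_add_mul, EJA.mem_peirce_one_s11.mp hx]
  refine ⟨fun i hij ξ hξ => ?_, fun ξ hξ => ?_, fun ξ hξ => EJA.mem_repSpace.mp hξ,
    fun x' _ ξ _ => hΦ.apply_mul x x' ξ⟩
  · have hcj_anticomm : Φ (c i) * Φ (c j) + Φ (c j) * Φ (c i) = 0 := by
      rw [hΦ.mul_add_mul, horth i j hij, map_zero, smul_zero]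
    have hcj_ξ : Φ (c j) ξ = 0 := Module.End.apply_eq_zero_of_mul_add_mul_eq_zero
      (hΦ.isIdempotentElem (hidem i)) hcj_anticomm (EJA.mem_repSpace.mp hξ)
    exact Module.End.apply_eq_zero_of_mul_add_mul_eq_two_nsmul
      (hΦ.isIdempotentElem (hidem j)) hx_peirce hcj_ξ
  · exact EJA.mem_repSpace.mpr
      (Module.End.apply_fixed_of_mul_add_mul_eq_two_nsmul hx_peirce (EJA.mem_repSpace.mp hξ))
end

section
/- Let (E, Φ) be a regular representation of a Euclidean Jordan algebra J (i.e. there exists ξ⁰ ∈ E with Q(ξ⁰) = e) and c = (c₁,…,c_k) a CSOI. Then each restricted representation (E_j, Φ_j) of J_j is regular: Q_j(ξ⁰_j) = c_j where ξ⁰_j = Φ(c_j)ξ⁰. -/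
open scoped RealInnerProductSpace

variable {J : Type} [NormedAddCommGroup J] [InnerProductSpace ℝ J] [FiniteDimensional ℝ J]

variable {E : Type} [NormedAddCommGroup E] [InnerProductSpace ℝ E] [FiniteDimensional ℝ E]

/-!
Since `c_j` is idempotent, `P = Φ(c_j)` is an orthogonal projection, and for `x` in the Peirce
`1`-space of `c_j` the identity `Φ(x) = ½ (P Φ(x) + Φ(x) P)` forces `Φ(x) = P Φ(x) P`. Hence for
all such `x`
`⟪Q_j(P ξ⁰), x⟫ = ⟪Φ(x) P ξ⁰, P ξ⁰⟫ = ⟪Φ(x) ξ⁰, ξ⁰⟫ = ⟪Q(ξ⁰), x⟫ = ⟪e, x⟫ = ⟪c_j, x⟫`,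
and both `Q_j(P ξ⁰)` and `c_j` lie in that Peirce space.
-/

theorem IsIdempotentElem.eq_mul_mul_of_eq_half_smul {K R : Type*} [Field K] [NeZero (2 : K)]
    [Ring R] [Algebra K R] {p T : R} (hp : IsIdempotentElem p)
    (hT : T = (2 : K)⁻¹ • (p * T + T * p)) : T = p * T * p := by
  have hT2 : (2 : K) • T = p * T + T * p := by
    nth_rewrite 1 [hT]
    rw [smul_smul, mul_inv_cancel₀ two_ne_zero, one_smul]
  have hleft : p * T = p * T * p := by
    have h := congrArg (p * ·) hT2
    simp only [two_smul, mul_add, ← mul_assoc, hp.eq] at h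
    exact add_left_cancel h
  have hright : T * p = p * T * p := by
    have h := congrArg (· * p) hT2
    simp only [two_smul, add_mul, mul_assoc, hp.eq] at h
    rw [mul_assoc]
    exact add_right_cancel h
  rw [hleft, hright, ← two_smul K] at hT2
  exact smul_right_injective R two_ne_zero hT2

theorem Submodule.eq_of_forall_inner_eq {𝕜 F : Type*} [RCLike 𝕜] [NormedAddCommGroup F]
    [InnerProductSpace 𝕜 F] {S : Submodule 𝕜 F} {u v : F} (hu : u ∈ S) (hv : v ∈ S)
    (h : ∀ x ∈ S, inner 𝕜 u x = inner 𝕜 v x) : u = v :=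
  congrArg Subtype.val (ext_inner_right 𝕜 (x := (⟨u, hu⟩ : S)) (y := ⟨v, hv⟩) fun w ↦ h w w.2)

section

omit [FiniteDimensional ℝ J] [FiniteDimensional ℝ E]

variable {A : EJA J} {Φ : J →ₗ[ℝ] E →ₗ[ℝ] E} {c x : J}

theorem EJA.mem_peirce_one_iff : x ∈ A.peirce c 1 ↔ A.mul c x = x := by
  rw [EJA.peirce, Module.End.mem_eigenspace_iff, one_smul]

theorem EJA.inner_one_eq_inner_of_mem_peirce_one (hx : x ∈ A.peirce c 1) :
    ⟪A.one, x⟫ = ⟪c, x⟫ :=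
  calc ⟪A.one, x⟫ = ⟪A.one, A.mul c x⟫ := by rw [EJA.mem_peirce_one_iff.mp hx]
    _ = ⟪A.mul c A.one, x⟫ := (A.assoc_inner c A.one x).symm
    _ = ⟪c, x⟫ := by rw [A.comm, A.one_mul]

theorem EJA.IsRep.isIdempotentElem_apply (hΦ : A.IsRep Φ) (hc : A.mul c c = c) :
    IsIdempotentElem (Φ c) := by
  have h := hΦ.2.1 c c
  rw [hc, ← two_smul ℝ, smul_smul, inv_mul_cancel₀ two_ne_zero, one_smul] at h
  exact h.symm

theorem EJA.IsRep.apply_eq_mul_mul_of_mem_peirce_one (hΦ : A.IsRep Φ) (hc : A.mul c c = c)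
    (hx : x ∈ A.peirce c 1) : Φ x = Φ c * Φ x * Φ c := by
  refine (hΦ.isIdempotentElem_apply hc).eq_mul_mul_of_eq_half_smul (K := ℝ) ?_
  have h := hΦ.2.1 c x
  rwa [EJA.mem_peirce_one_iff.mp hx] at h

theorem EJA.IsRep.inner_apply_self_eq_of_mem_peirce_one (hΦ : A.IsRep Φ) (hc : A.mul c c = c)
    (hx : x ∈ A.peirce c 1) (ξ : E) : ⟪Φ x (Φ c ξ), Φ c ξ⟫ = ⟪Φ x ξ, ξ⟫ := by
  rw [← hΦ.1 c]
  conv_rhs => rw [hΦ.apply_eq_mul_mul_of_mem_peirce_one hc hx]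
  rfl

theorem EJA.IsRep.apply_mem_repSpace (hΦ : A.IsRep Φ) {k : ℕ} {c : Fin k → J} {j : Fin k}
    (hc : A.mul (c j) (c j) = c j) (ξ : E) : Φ (c j) ξ ∈ A.repSpace Φ c j := by
  rw [EJA.repSpace, Module.End.mem_eigenspace_iff, one_smul]
  exact congrArg (· ξ) (hΦ.isIdempotentElem_apply hc).eq

end

/-- If the representation is regular, i.e. `Q(ξ⁰) = e` for some `ξ⁰`, then
each restricted representation is regular: `Q_j(Φ(c_j)ξ⁰) = c_j`. -/
theorem stmt13 (A : EJA J) (Φ : J →ₗ[ℝ] E →ₗ[ℝ] E) (hΦ : A.IsRep Φ)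
    (k : ℕ) (c : Fin k → J) (hc : A.IsCSOI c)
    (Q : E → J) (hQ : ∀ (ξ : E) (x : J), ⟪Q ξ, x⟫ = ⟪Φ x ξ, ξ⟫)
    (Qj : Fin k → E → J)
    (hQj : ∀ (j : Fin k), ∀ ξ ∈ A.repSpace Φ c j,
      Qj j ξ ∈ A.peirce (c j) 1 ∧
        ∀ x ∈ A.peirce (c j) 1, ⟪Qj j ξ, x⟫ = ⟪Φ x ξ, ξ⟫)
    (ξ0 : E) (hreg : Q ξ0 = A.one) :
    ∀ j : Fin k, Qj j (Φ (c j) ξ0) = c j := by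
  intro j
  have hidem : A.mul (c j) (c j) = c j := hc.1 j
  obtain ⟨hQj_mem, hQj_inner⟩ := hQj j _ (hΦ.apply_mem_repSpace hidem ξ0)
  refine Submodule.eq_of_forall_inner_eq hQj_mem (EJA.mem_peirce_one_iff.mpr hidem) fun x hx ↦ ?_
  rw [hQj_inner x hx, hΦ.inner_apply_self_eq_of_mem_peirce_one hidem hx, ← hQ, hreg,
    EJA.inner_one_eq_inner_of_mem_peirce_one hx]
end

section
/- For a Euclidean space F of dimension N and a harmonic polynomial q on F (extended holomorphically), ∫_F e^{i⟨ξ,η⟩} e^{−½⟨ξ,ξ⟩} q(ξ) dξ = (2π)^{N/2} e^{−½⟨η,η⟩} q(iη) for all η ∈ F. -/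
/-!
Put `c = i η`. The integrand is `∏ₖ exp(-ξₖ²/2 + cₖ ξₖ) · q(ξ)`, so by Fubini the integral is
the linear functional `Λ` on polynomials sending `ξ^α` to `∏ₖ M(cₖ, αₖ)`, where
`M(c, n) = ∫ tⁿ exp(-t²/2 + c t) dt`. Integration by parts gives
`M(c, n+1) = c M(c, n) + n M(c, n-1)`, that is `Λ(Xⱼ p) = cⱼ Λ(p) + Λ(∂ⱼ p)`. Since
`[Δ, Xⱼ] = 2 ∂ⱼ`, the functional `p ↦ Λ(1) (e^{Δ/2} p)(c)` satisfies the same recursion, so the two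
agree; for harmonic `q` we have `e^{Δ/2} q = q`. Finally
`Λ(1) = ∏ₖ M(cₖ, 0) = (2π)^{N/2} e^{-|η|²/2}`.
-/

open scoped RealInnerProductSpace
open MeasureTheory

open MvPolynomial Finset Complex
open scoped Nat

namespace MvPolynomial

variable {σ R : Type*} [CommRing R]

theorem pderiv_pderiv_comm (i j : σ) (p : MvPolynomial σ R) :
    pderiv i (pderiv j p) = pderiv j (pderiv i p) := by
  have : ⁅pderiv i, pderiv j⁆ = (0 : Derivation R (MvPolynomial σ R) (MvPolynomial σ R)) :=
    derivation_ext fun k => by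
      classical
      rw [Derivation.commutator_apply, pderiv_X, pderiv_X]
      simp [Pi.single_apply, apply_ite]
  simpa [Derivation.commutator_apply, sub_eq_zero] using congr($this p)

variable [Fintype σ]

noncomputable def laplacian : MvPolynomial σ R →ₗ[R] MvPolynomial σ R :=
  ∑ i, (pderiv i).toLinearMap ∘ₗ (pderiv i).toLinearMap

theorem laplacian_apply (p : MvPolynomial σ R) :
    laplacian p = ∑ i, pderiv i (pderiv i p) := by
  simp [laplacian]

theorem laplacian_C (a : R) : laplacian (C a : MvPolynomial σ R) = 0 := by
  simp [laplacian_apply]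

theorem pderiv_laplacian (j : σ) (p : MvPolynomial σ R) :
    pderiv j (laplacian p) = laplacian (pderiv j p) := by
  simp only [laplacian_apply, map_sum, pderiv_pderiv_comm j]

theorem laplacian_X_mul (j : σ) (p : MvPolynomial σ R) :
    laplacian (X j * p) = X j * laplacian p + (2 : R) • pderiv j p := by
  classical
  have h : ∀ i, pderiv i (pderiv i (X j * p)) =
      X j * pderiv i (pderiv i p) + if i = j then (2 : R) • pderiv j p else 0 := by
    intro i
    rcases eq_or_ne i j with rfl | hij
    · simp only [Derivation.leibniz, smul_eq_mul, pderiv_X, Pi.single_eq_same, mul_one, map_add,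
        ↓reduceIte, two_smul]
      ring
    · simp [pderiv_X_of_ne hij.symm, hij]
  rw [laplacian_apply, laplacian_apply, sum_congr rfl fun i _ => h i, sum_add_distrib, mul_sum,
    sum_ite_eq' univ j, if_pos (mem_univ j)]

theorem laplacian_map {S : Type*} [CommRing S] (f : R →+* S) (p : MvPolynomial σ R) :
    laplacian (map f p) = map f (laplacian p) := by
  simp [laplacian_apply, pderiv_map]

theorem pderiv_laplacian_pow (j : σ) (m : ℕ) (p : MvPolynomial σ R) :
    pderiv j ((laplacian ^ m) p) = (laplacian ^ m) (pderiv j p) := by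
  induction m with
  | zero => rfl
  | succ m ih => rw [pow_succ', Module.End.mul_apply, Module.End.mul_apply, pderiv_laplacian, ih]

theorem laplacian_pow_succ_X_mul (j : σ) (m : ℕ) (p : MvPolynomial σ R) :
    (laplacian ^ (m + 1)) (X j * p) =
      X j * (laplacian ^ (m + 1)) p + (2 * (m + 1) : R) • pderiv j ((laplacian ^ m) p) := by
  induction m with
  | zero => simp [laplacian_X_mul]
  | succ m ih =>
    rw [pow_succ', Module.End.mul_apply, ih, map_add, laplacian_X_mul, map_smul]
    simp only [pow_succ', Module.End.mul_apply, pderiv_laplacian]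
    push_cast
    module

section Field

variable {K : Type*} [Field K]

noncomputable def expHalfLaplacianTrunc (n : ℕ) : MvPolynomial σ K →ₗ[K] MvPolynomial σ K :=
  ∑ m ∈ range (n + 1), ((2 : K) ^ m * m !)⁻¹ • laplacian ^ m

theorem expHalfLaplacianTrunc_apply (n : ℕ) (p : MvPolynomial σ K) :
    expHalfLaplacianTrunc n p =
      ∑ m ∈ range (n + 1), ((2 : K) ^ m * m !)⁻¹ • (laplacian ^ m) p := by
  simp [expHalfLaplacianTrunc]

theorem expHalfLaplacianTrunc_of_laplacian_eq_zero {p : MvPolynomial σ K} (hp : laplacian p = 0)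
    (n : ℕ) : expHalfLaplacianTrunc n p = p := by
  rw [expHalfLaplacianTrunc_apply, sum_range_succ']
  simp [pow_succ, hp]

theorem pderiv_expHalfLaplacianTrunc (j : σ) (n : ℕ) (p : MvPolynomial σ K) :
    pderiv j (expHalfLaplacianTrunc n p) = expHalfLaplacianTrunc n (pderiv j p) := by
  simp [expHalfLaplacianTrunc_apply, pderiv_laplacian_pow]

theorem expHalfLaplacianTrunc_succ_X_mul [CharZero K] (j : σ) (n : ℕ) (p : MvPolynomial σ K) :
    expHalfLaplacianTrunc (n + 1) (X j * p) =
      X j * expHalfLaplacianTrunc (n + 1) p + pderiv j (expHalfLaplacianTrunc n p) := by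
  have hcoef : ∀ m : ℕ,
      ((2 : K) ^ (m + 1) * (m + 1)!)⁻¹ * (2 * (m + 1)) = ((2 : K) ^ m * m !)⁻¹ := by
    intro m
    rw [pow_succ, Nat.factorial_succ]
    push_cast
    field_simp
  simp only [expHalfLaplacianTrunc_apply, mul_sum, map_sum, Derivation.map_smul, mul_smul_comm]
  rw [sum_range_succ' _ (n + 1), sum_range_succ' _ (n + 1)]
  simp only [laplacian_pow_succ_X_mul, smul_add, smul_smul, hcoef, sum_add_distrib]
  simp only [pow_zero, Nat.factorial_zero, Nat.cast_one, mul_one, inv_one, Module.End.one_apply,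
    one_smul]
  abel

variable [CharZero K] (Λ : MvPolynomial σ K →ₗ[K] K) {c : σ → K}

theorem eq_mul_eval_expHalfLaplacianTrunc_monomial
    (hΛ : ∀ j p, Λ (X j * p) = c j * Λ p + Λ (pderiv j p))
    (α : σ →₀ ℕ) (n : ℕ) (hα : α.degree ≤ n) (a : K) :
    Λ (monomial α a) = Λ 1 * eval c (expHalfLaplacianTrunc n (monomial α a)) := by
  induction hd : α.degree using Nat.strong_induction_on generalizing α n a with
  | _ d ih =>
    rcases eq_or_ne α 0 with rfl | hα0
    · rw [← C_apply, expHalfLaplacianTrunc_of_laplacian_eq_zero (laplacian_C a), eval_C,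
        C_eq_smul_one, map_smul, smul_eq_mul, mul_comm]
    obtain ⟨j, hj⟩ : ∃ j, α j ≠ 0 := by
      by_contra! h
      exact hα0 (Finsupp.ext h)
    set β := α - Finsupp.single j 1
    have hαβ : α = β + Finsupp.single j 1 :=
      (tsub_add_cancel_of_le (Finsupp.single_le_iff.mpr (Nat.one_le_iff_ne_zero.mpr hj))).symm
    have hdeg : α.degree = β.degree + 1 := by rw [hαβ, map_add, Finsupp.degree_single]
    have hdeg_sub : (β - Finsupp.single j 1).degree ≤ β.degree := Finsupp.degree_mono tsub_le_self
    obtain ⟨m, rfl⟩ : ∃ m, n = m + 1 := Nat.exists_eq_add_of_le' (by omega)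
    rw [hαβ, add_comm, ← one_mul a, ← monomial_mul, ← X, hΛ, expHalfLaplacianTrunc_succ_X_mul,
      pderiv_expHalfLaplacianTrunc, map_add, eval_mul, eval_X, mul_add,
      ih β.degree (by omega) β (m + 1) (by omega) a rfl, pderiv_monomial,
      ih _ (by omega) _ m (by omega) _ rfl]
    ring

theorem eq_mul_eval_expHalfLaplacianTrunc (hΛ : ∀ j p, Λ (X j * p) = c j * Λ p + Λ (pderiv j p))
    {p : MvPolynomial σ K} {n : ℕ} (hp : p.totalDegree ≤ n) :
    Λ p = Λ 1 * eval c (expHalfLaplacianTrunc n p) := by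
  have hmon : ∀ α ∈ p.support, Λ (monomial α (coeff α p)) =
      Λ 1 * eval c (expHalfLaplacianTrunc n (monomial α (coeff α p))) := fun α hα =>
    eq_mul_eval_expHalfLaplacianTrunc_monomial Λ hΛ α n ((le_totalDegree hα).trans hp) _
  conv_lhs => rw [p.as_sum]
  rw [map_sum, sum_congr rfl hmon, ← mul_sum, ← map_sum, ← map_sum, ← p.as_sum]

theorem eq_mul_eval_of_laplacian_eq_zero (hΛ : ∀ j p, Λ (X j * p) = c j * Λ p + Λ (pderiv j p))
    {p : MvPolynomial σ K} (hp : laplacian p = 0) : Λ p = Λ 1 * eval c p := by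
  simpa only [expHalfLaplacianTrunc_of_laplacian_eq_zero hp] using
    eq_mul_eval_expHalfLaplacianTrunc Λ hΛ (p := p) le_rfl

end Field

section Moments

variable {R : Type*} [CommSemiring R] (w : σ → ℕ → R)

noncomputable def momentFunctional : MvPolynomial σ R →ₗ[R] R :=
  (basisMonomials σ R).constr R fun α => ∏ k, w k (α k)

theorem momentFunctional_monomial (α : σ →₀ ℕ) (a : R) :
    momentFunctional w (monomial α a) = a * ∏ k, w k (α k) := by
  have hbasis := (basisMonomials σ R).constr_basis R (fun α => ∏ k, w k (α k)) α
  rw [coe_basisMonomials] at hbasis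
  rw [show monomial α a = a • monomial α 1 by rw [smul_monomial, smul_eq_mul, mul_one], map_smul,
    momentFunctional, hbasis, smul_eq_mul]

theorem momentFunctional_one : momentFunctional w 1 = ∏ k, w k 0 := by
  rw [← C_1, C_apply, momentFunctional_monomial, one_mul]
  rfl

theorem momentFunctional_X_mul {c : σ → R}
    (hw : ∀ k n, w k (n + 1) = c k * w k n + n * w k (n - 1)) (j : σ) (p : MvPolynomial σ R) :
    momentFunctional w (X j * p) =
      c j * momentFunctional w p + momentFunctional w (pderiv j p) := by
  classical
  induction p using MvPolynomial.induction_on' with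
  | monomial β a =>
    have split : ∀ γ : σ →₀ ℕ, (∀ k ≠ j, γ k = β k) →
        ∏ k, w k (γ k) = w j (γ j) * ∏ k ∈ univ.erase j, w k (β k) := fun γ hγ => by
      rw [← mul_prod_erase univ _ (mem_univ j)]
      exact congrArg _ (prod_congr rfl fun k hk => by rw [hγ k (ne_of_mem_erase hk)])
    rw [X, monomial_mul, one_mul, pderiv_monomial, momentFunctional_monomial,
      momentFunctional_monomial, momentFunctional_monomial,
      split _ fun k hk => by simp [hk.symm], split β fun _ _ => rfl,
      split _ fun k hk => by simp [hk.symm]]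
    simp only [Finsupp.add_apply, Finsupp.single_eq_same, Finsupp.tsub_apply]
    rw [add_comm 1, hw]
    ring
  | add p q hp hq =>
    simp only [mul_add, map_add, hp, hq]
    ring

end Moments

end MvPolynomial

theorem integrable_pow_mul_cexp_quadratic {b : ℂ} (hb : b.re < 0) (c : ℂ) (n : ℕ) :
    Integrable fun x : ℝ => (x : ℂ) ^ n * cexp (b * x ^ 2 + c * x) := by
  have hexp : ∀ c' : ℂ, Integrable fun x : ℝ => ‖cexp (b * x ^ 2 + c' * x)‖ := fun c' => by
    simpa using (integrable_cexp_quadratic' hb c' 0).norm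
  refine (((hexp (c + 1)).add (hexp (c - 1))).const_mul (n ! : ℝ)).mono' (by fun_prop)
    (ae_of_all _ fun x => ?_)
  have hpow : |x| ^ n ≤ n ! * (Real.exp x + Real.exp (-x)) := by
    have h1 := Real.pow_div_factorial_le_exp |x| (abs_nonneg x) n
    rw [div_le_iff₀ (by positivity)] at h1
    have h2 : Real.exp |x| ≤ Real.exp x + Real.exp (-x) := by
      rcases abs_cases x with ⟨h, _⟩ | ⟨h, _⟩ <;> rw [h] <;>
        linarith [Real.exp_pos x, Real.exp_pos (-x)]
    nlinarith [(Nat.cast_pos (α := ℝ)).mpr (Nat.factorial_pos n)]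
  have hre : ∀ c' : ℂ, (b * x ^ 2 + c' * x).re = (b * x ^ 2 + c * x).re + (c' - c).re * x := by
    intro c'
    simp only [add_re, mul_re, ← ofReal_pow, ofReal_re, ofReal_im, sub_re]
    ring
  simp only [Pi.add_apply, norm_mul, norm_pow, norm_real, Real.norm_eq_abs, norm_exp, hre (c + 1),
    hre (c - 1), add_sub_cancel_left, sub_sub_cancel_left, Real.exp_add, one_re, neg_re, one_mul,
    neg_mul]
  nlinarith [Real.exp_pos (b * x ^ 2 + c * x).re]

noncomputable def gaussMoment (c : ℂ) (n : ℕ) : ℂ :=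
  ∫ x : ℝ, (x : ℂ) ^ n * cexp (-(1 / 2) * x ^ 2 + c * x)

theorem integrable_gaussMoment_integrand (c : ℂ) (n : ℕ) :
    Integrable fun x : ℝ => (x : ℂ) ^ n * cexp (-(1 / 2) * x ^ 2 + c * x) :=
  integrable_pow_mul_cexp_quadratic (by norm_num) c n

theorem gaussMoment_zero (c : ℂ) :
    gaussMoment c 0 = (√(2 * Real.pi) : ℂ) * cexp (c ^ 2 / 2) := by
  have h := integral_cexp_quadratic (b := -(1 / 2)) (by norm_num) c 0
  simp only [add_zero] at h
  rw [gaussMoment]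
  simp only [pow_zero, one_mul, h, Real.sqrt_eq_rpow,
    ofReal_cpow (by positivity : (0 : ℝ) ≤ 2 * Real.pi)]
  congr 2 <;> push_cast <;> ring

theorem gaussMoment_succ (c : ℂ) (n : ℕ) :
    gaussMoment c (n + 1) = c * gaussMoment c n + n * gaussMoment c (n - 1) := by
  set E : ℝ → ℂ := fun x => cexp (-(1 / 2) * x ^ 2 + c * x)
  have hint : ∀ m : ℕ, Integrable fun x : ℝ => (x : ℂ) ^ m * E x :=
    integrable_gaussMoment_integrand c
  have hderiv : ∀ x : ℝ, HasDerivAt (fun y : ℝ => (y : ℂ) ^ n * E y)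
      (n * ((x : ℂ) ^ (n - 1) * E x) + c * ((x : ℂ) ^ n * E x) - (x : ℂ) ^ (n + 1) * E x) x := by
    intro x
    have hq : HasDerivAt (fun z : ℂ => -(1 / 2) * z ^ 2 + c * z) (-(1 / 2) * (2 * x) + c) x :=
      (((hasDerivAt_pow 2 (x : ℂ)).const_mul _).add
        ((hasDerivAt_id' (x : ℂ)).const_mul c)).congr_deriv (by push_cast; ring)
    exact ((hasDerivAt_pow n (x : ℂ)).comp_ofReal.mul hq.comp_ofReal.cexp).congr_deriv (by ring)
  have h1 : Integrable fun x : ℝ => (n : ℂ) * ((x : ℂ) ^ (n - 1) * E x) := (hint _).const_mul _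
  have h2 : Integrable fun x : ℝ => c * ((x : ℂ) ^ n * E x) := (hint n).const_mul _
  have h := integral_eq_zero_of_hasDerivAt_of_integrable hderiv
    ((h1.add h2).sub (hint (n + 1))) (hint n)
  rw [integral_sub
      (f := fun x : ℝ => (n : ℂ) * ((x : ℂ) ^ (n - 1) * E x) + c * ((x : ℂ) ^ n * E x))
      (h1.add h2) (hint (n + 1)),
    integral_add h1 h2, integral_const_mul, integral_const_mul] at h
  simp only [gaussMoment]
  linear_combination -h

theorem integral_gaussian_mul_eval {ι : Type*} [Fintype ι] (c : ι → ℂ) (p : MvPolynomial ι ℂ) :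
    ∫ x : ι → ℝ, (∏ k, cexp (-(1 / 2) * (x k : ℂ) ^ 2 + c k * x k)) * eval (fun k => (x k : ℂ)) p =
      momentFunctional (fun k => gaussMoment (c k)) p := by
  have hterm : ∀ α : ι →₀ ℕ, ∀ x : ι → ℝ,
      (∏ k, cexp (-(1 / 2) * (x k : ℂ) ^ 2 + c k * x k)) * (coeff α p * ∏ k, (x k : ℂ) ^ α k) =
        coeff α p * ∏ k, ((x k : ℂ) ^ α k * cexp (-(1 / 2) * (x k : ℂ) ^ 2 + c k * x k)) := by
    intro α x
    rw [prod_mul_distrib]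
    ring
  have hint : ∀ α : ι →₀ ℕ, Integrable fun x : ι → ℝ =>
      coeff α p * ∏ k, ((x k : ℂ) ^ α k * cexp (-(1 / 2) * (x k : ℂ) ^ 2 + c k * x k)) :=
    fun α =>
      (Integrable.fintype_prod fun k => integrable_gaussMoment_integrand (c k) (α k)).const_mul _
  simp_rw [eval_eq', mul_sum, hterm]
  rw [integral_finsetSum _ fun α _ => hint α]
  conv_rhs => rw [p.as_sum, map_sum]
  refine sum_congr rfl fun α _ => ?_
  rw [integral_const_mul, momentFunctional_monomial, integral_fintype_prod_volume_eq_prod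
    (fun k (t : ℝ) => (t : ℂ) ^ α k * cexp (-(1 / 2) * (t : ℂ) ^ 2 + c k * t))]
  rfl

theorem integral_gaussian_mul_eval_of_laplacian_eq_zero {ι : Type*} [Fintype ι] (c : ι → ℂ)
    {p : MvPolynomial ι ℂ} (hp : laplacian p = 0) :
    ∫ x : ι → ℝ, (∏ k, cexp (-(1 / 2) * (x k : ℂ) ^ 2 + c k * x k)) * eval (fun k => (x k : ℂ)) p =
      (∏ k, (√(2 * Real.pi) : ℂ) * cexp (c k ^ 2 / 2)) * eval c p := by
  rw [integral_gaussian_mul_eval, eq_mul_eval_of_laplacian_eq_zero _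
    (momentFunctional_X_mul _ fun k => gaussMoment_succ (c k)) hp, momentFunctional_one]
  simp only [gaussMoment_zero]

theorem ofReal_eval_eq_eval_map {ι : Type*} (x : ι → ℝ) (p : MvPolynomial ι ℝ) :
    ((eval x p : ℝ) : ℂ) = eval (fun k => (x k : ℂ)) (p.map (algebraMap ℝ ℂ)) := by
  rw [eval_map]
  exact eval₂_comp_left ofRealHom (RingHom.id ℝ) x p

theorem cexp_inner_mul_I_mul_gaussian_eq_prod {ι : Type*} [Fintype ι] (ξ η : EuclideanSpace ℝ ι) :
    cexp ((⟪ξ, η⟫ : ℝ) * I) * (Real.exp (-(1 / 2) * ⟪ξ, ξ⟫) : ℂ) =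
      ∏ k, cexp (-(1 / 2) * (ξ k : ℂ) ^ 2 + (I * η k) * ξ k) := by
  rw [ofReal_exp, ← Complex.exp_add, ← Complex.exp_sum]
  congr 1
  simp only [PiLp.inner_apply, RCLike.inner_apply, conj_trivial]
  push_cast
  rw [sum_mul, mul_sum, ← sum_add_distrib]
  exact sum_congr rfl fun k _ => by ring

theorem prod_sqrt_two_pi_mul_cexp_sq_div_two {ι : Type*} [Fintype ι] (η : EuclideanSpace ℝ ι) :
    ∏ k, (√(2 * Real.pi) : ℂ) * cexp ((I * η k) ^ 2 / 2) =
      (((2 * Real.pi) ^ ((Fintype.card ι : ℝ) / 2) * Real.exp (-(1 / 2) * ⟪η, η⟫) : ℝ) : ℂ) := by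
  rw [prod_mul_distrib, prod_const, ← Complex.exp_sum, card_univ]
  simp only [PiLp.inner_apply, RCLike.inner_apply, conj_trivial, mul_pow, I_sq]
  push_cast
  rw [Real.sqrt_eq_rpow, ← ofReal_pow, ← Real.rpow_natCast, ← Real.rpow_mul (by positivity),
    mul_sum]
  congr 2
  · ring_nf
  · exact sum_congr rfl fun k _ => by ring

/-- The classical Hecke formula: for a harmonic polynomial `q` on a Euclidean
space `F = ℝ^N` (harmonicity expressed as `Σ_k ∂_k² q = 0`),
`∫_F e^{i⟨ξ,η⟩} e^{-½⟨ξ,ξ⟩} q(ξ) dξ = (2π)^{N/2} e^{-½⟨η,η⟩} q(iη)`. -/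
theorem stmt16 (N : ℕ) (P : MvPolynomial (Fin N) ℝ)
    (hharm : ∑ k : Fin N, MvPolynomial.pderiv k (MvPolynomial.pderiv k P) = 0) :
    ∀ η : EuclideanSpace ℝ (Fin N),
      (∫ ξ : EuclideanSpace ℝ (Fin N),
          Complex.exp ((⟪ξ, η⟫ : ℝ) * Complex.I) *
            (Real.exp (-(1 / 2) * ⟪ξ, ξ⟫) : ℂ) *
            ((MvPolynomial.eval (fun k => ξ k) P : ℝ) : ℂ))
        = (((2 * Real.pi) ^ ((N : ℝ) / 2) * Real.exp (-(1 / 2) * ⟪η, η⟫) : ℝ) : ℂ) *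
            MvPolynomial.eval (fun k => Complex.I * ((η k : ℝ) : ℂ))
              (P.map (algebraMap ℝ ℂ)) := by
  intro η
  have hQ : laplacian (P.map (algebraMap ℝ ℂ)) = 0 := by
    rw [laplacian_map, laplacian_apply, hharm, map_zero]
  simp_rw [cexp_inner_mul_I_mul_gaussian_eq_prod, ofReal_eval_eq_eval_map]
  rw [(PiLp.volume_preserving_ofLp (Fin N)).integral_comp
      (MeasurableEquiv.toLp 2 (Fin N → ℝ)).symm.measurableEmbedding
      (fun x : Fin N → ℝ => (∏ k, cexp (-(1 / 2) * (x k : ℂ) ^ 2 + (I * η k) * x k)) *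
        eval (fun k => (x k : ℂ)) (P.map (algebraMap ℝ ℂ))),
    integral_gaussian_mul_eval_of_laplacian_eq_zero _ hQ, prod_sqrt_two_pi_mul_cexp_sq_div_two,
    Fintype.card_fin]
end

section
/- In the rank-2 Jordan algebra J_n = ℝ ⊕ ℝ^{n−1} (n ≥ 4) with the CSOI c = (c₁, c₂), c₁ = (½, ½, 0,…,0), c₂ = (½, −½, 0,…,0), a polynomial q on J is c-homogeneous of multidegree (p₁,p₂) if and only if, in the adapted coordinates (y₁, y₂, y') with y₁ = s + x₁, y₂ = s − x₁, y_j = √2 x_{j−1}, it has the form q(y) = Σ_{j=0}^{min(p₁,p₂)} a_j y₁^{p₁−j} y₂^{p₂−j} |y'|^{2j} for some coefficients a_j ∈ ℂ. -/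
/-!
Rotation invariance (there are two independent axes since `n - 2 ≥ 2`) makes `q(y₁, y₂, y')`
a function of `(y₁, y₂, |y'|)`; in particular `t ↦ q(1, 1, t e)` is an even polynomial, i.e.
`G(t²)` for a polynomial `G`. On the quadrant `y₁, y₂ > 0` the scaling law then gives
`q(y) = y₁^{p₁} y₂^{p₂} G(|y'|² / (y₁ y₂))`. As `t ↦ q(t, 1, e) = t^{p₁} G(1/t)` is a polynomial,
`deg G ≤ p₁`, and likewise `deg G ≤ p₂`; expanding `G` gives the stated form on the quadrant, hence
everywhere, because polynomials agreeing on a product of infinite sets are equal.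
-/

/-- Evaluation of a (complex) polynomial in the adapted coordinates
`(y₁, y₂, y')` of the rank-2 Jordan algebra `J_n`. -/
noncomputable def ev17 {n : ℕ} (P : MvPolynomial (Fin 2 ⊕ Fin (n - 2)) ℂ)
    (y₁ y₂ : ℝ) (y' : Fin (n - 2) → ℝ) : ℂ :=
  MvPolynomial.eval (Sum.elim ![(y₁ : ℂ), (y₂ : ℂ)] (fun k => ((y' k : ℝ) : ℂ))) P

namespace Matrix

variable {ι : Type*} [Fintype ι] [DecidableEq ι]

theorem exists_transpose_mul_self_eq_one_mulVec_single (i : ι) (v : ι → ℝ) :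
    ∃ A : Matrix ι ι ℝ, Aᵀ * A = 1 ∧ A *ᵥ Pi.single i √(∑ k, v k ^ 2) = v := by
  by_cases hv : v = 0
  · exact ⟨1, by simp, by simp [hv]⟩
  set r := √(∑ k, v k ^ 2)
  have hnorm : ‖WithLp.toLp 2 v‖ = r := by simp [EuclideanSpace.norm_eq, r]
  have hr : r ≠ 0 := by
    rw [← hnorm]; simpa using hv
  have hu : Orthonormal ℝ (({i} : Set ι).domRestrict fun _ => r⁻¹ • WithLp.toLp 2 v) := by
    rw [orthonormal_subsingleton_iff]
    simp [norm_smul, hnorm, abs_of_nonneg (Real.sqrt_nonneg _), hr, r]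
  obtain ⟨b, hb⟩ := hu.exists_orthonormalBasis_extension_of_card_eq (by simp)
  refine ⟨(EuclideanSpace.basisFun ι ℝ).toBasis.toMatrix b,
    (mem_orthogonalGroup_iff' _ _).mp
      ((EuclideanSpace.basisFun ι ℝ).toMatrix_orthonormalBasis_mem_orthogonal b), ?_⟩
  ext k
  simp only [mulVec, dotProduct, Module.Basis.toMatrix_apply,
    OrthonormalBasis.coe_toBasis_repr_apply, EuclideanSpace.basisFun_repr, Pi.single_apply, mul_ite,
    mul_zero, Finset.sum_ite_eq', Finset.mem_univ, if_true, hb i rfl, PiLp.smul_apply, smul_eq_mul]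
  field_simp

theorem exists_transpose_mul_self_eq_one_det_eq_one_mulVec_single {i j : ι} (hij : i ≠ j)
    (v : ι → ℝ) :
    ∃ A : Matrix ι ι ℝ, Aᵀ * A = 1 ∧ A.det = 1 ∧ A *ᵥ Pi.single i √(∑ k, v k ^ 2) = v := by
  obtain ⟨A, hA, hAv⟩ := exists_transpose_mul_self_eq_one_mulVec_single i v
  have hdet : A.det * A.det = 1 := by
    simpa [det_transpose] using congrArg det hA
  rcases mul_self_eq_one_iff.mp hdet with hdet | hdet
  · exact ⟨A, hA, hdet, hAv⟩
  -- flipping the `j`-th axis fixes `Pi.single i _` and changes the sign of the determinant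
  set D : Matrix ι ι ℝ := diagonal (Function.update 1 j (-1))
  have hD : Dᵀ * D = 1 := by
    rw [diagonal_transpose, diagonal_mul_diagonal, ← diagonal_one]
    congr 1; ext k
    by_cases hk : k = j <;> simp [hk]
  have hDv : D *ᵥ Pi.single i √(∑ k, v k ^ 2) = Pi.single i √(∑ k, v k ^ 2) := by
    ext k
    by_cases hk : k = i <;> simp [D, mulVec_diagonal, hk, hij]
  refine ⟨A * D, ?_, ?_, ?_⟩
  · rw [transpose_mul, Matrix.mul_assoc, ← Matrix.mul_assoc Aᵀ, hA, Matrix.one_mul, hD]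
  · simp [D, det_diagonal, hdet, Finset.prod_update_of_mem]
  · rw [← mulVec_mulVec, hDv, hAv]

theorem sum_sq_mulVec_of_transpose_mul_self {A : Matrix ι ι ℝ} (hA : Aᵀ * A = 1) (v : ι → ℝ) :
    ∑ k, (A *ᵥ v) k ^ 2 = ∑ k, v k ^ 2 := by
  have h : (A *ᵥ v) ⬝ᵥ (A *ᵥ v) = v ⬝ᵥ v := by
    rw [dotProduct_mulVec, ← mulVec_transpose, mulVec_mulVec, hA, one_mulVec]
  simpa [dotProduct, sq] using h

theorem apply_eq_apply_single_of_det_eq_one {α : Type*} {i j : ι} (hij : i ≠ j)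
    {f : (ι → ℝ) → α} (hf : ∀ A : Matrix ι ι ℝ, Aᵀ * A = 1 → A.det = 1 → ∀ v, f (A *ᵥ v) = f v)
    (v : ι → ℝ) : f v = f (Pi.single i √(∑ k, v k ^ 2)) := by
  obtain ⟨A, hA, hdet, hAv⟩ := exists_transpose_mul_self_eq_one_det_eq_one_mulVec_single hij v
  conv_lhs => rw [← hAv]
  exact hf A hA hdet _

end Matrix

namespace MvPolynomial

variable {R σ : Type*} [CommSemiring R] [DecidableEq σ]

theorem exists_polynomial_eval_eq_eval_update (P : MvPolynomial σ R) (x : σ → R) (i : σ) :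
    ∃ A : Polynomial R, ∀ t, A.eval t = eval (Function.update x i t) P := by
  refine ⟨aeval (Function.update (Polynomial.C ∘ x) i Polynomial.X) P, fun t => ?_⟩
  rw [← Polynomial.coe_aeval_eq_eval, comp_aeval_apply, aeval_eq_eval]
  congr 2 with j
  by_cases hj : j = i <;> simp [hj]

end MvPolynomial

namespace Polynomial

theorem expand_two_contract_two {R : Type*} [CommRing R] [NoZeroDivisors R] [CharZero R]
    {Q : R[X]} (h : Q.comp (-X) = Q) : expand R 2 (contract 2 Q) = Q := by
  ext k
  rw [coeff_expand two_pos, coeff_contract two_ne_zero]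
  split_ifs with hk
  · rw [Nat.div_mul_cancel hk]
  · have hQk := congrArg (coeff · k) h
    rw [show (-X : R[X]) = C (-1) * X by simp, comp_C_mul_X_coeff,
      (Nat.odd_iff.mpr (Nat.two_dvd_ne_zero.mp hk)).neg_one_pow, mul_neg_one] at hQk
    exact (self_eq_neg.mp hQk.symm).symm

theorem natDegree_le_of_eval_eq_pow_mul_eval_inv {K : Type*} [Field K] {A G : K[X]} {p : ℕ}
    {s : Set K} (hs : s.Infinite) (h : ∀ t ∈ s, A.eval t = t ^ p * G.eval t⁻¹) :
    G.natDegree ≤ p := by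
  by_contra! hp
  set N := G.natDegree
  -- `t ^ N * G.eval t⁻¹` is the reflection of `G`, whose constant coefficient is `G.leadingCoeff`
  have key : X ^ N * A = X ^ p * reflect N G := by
    refine eq_of_infinite_eval_eq _ _ ((hs.sdiff (Set.finite_singleton 0)).mono ?_)
    rintro t ⟨hts, ht0 : t ≠ 0⟩
    have : Invertible t⁻¹ := invertibleOfNonzero (inv_ne_zero ht0)
    have hrefl := eval₂_reflect_mul_pow (RingHom.id K) t⁻¹ N G le_rfl
    simp only [invOf_eq_inv, inv_inv, eval₂_id] at hrefl
    simp only [Set.mem_ofPred_eq, eval_mul, eval_pow, eval_X, h t hts, ← hrefl]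
    have hN : t ^ N * t⁻¹ ^ N = 1 := by rw [← mul_pow, mul_inv_cancel₀ ht0, one_pow]
    linear_combination t ^ p * eval t (reflect N G) * hN
  have hcoeff := congrArg (coeff · p) key
  rw [coeff_X_pow_mul', if_neg (not_le.mpr hp), coeff_X_pow_mul', if_pos le_rfl, Nat.sub_self,
    coeff_reflect, revAt_le (Nat.zero_le N), Nat.sub_zero] at hcoeff
  have hG : G = 0 := leadingCoeff_eq_zero.mp hcoeff.symm
  simp [N, hG] at hp

theorem pow_mul_pow_mul_eval_div_eq_sum {K : Type*} [Field K] {G : K[X]} {p₁ p₂ : ℕ}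
    (h₁ : G.natDegree ≤ p₁) (h₂ : G.natDegree ≤ p₂) {x y : K} (hx : x ≠ 0) (hy : y ≠ 0) (u : K) :
    x ^ p₁ * y ^ p₂ * G.eval (u / (x * y)) =
      ∑ j ∈ Finset.range (min p₁ p₂ + 1), G.coeff j * x ^ (p₁ - j) * y ^ (p₂ - j) * u ^ j := by
  rw [eval_eq_sum_range' (n := min p₁ p₂ + 1) (by omega), Finset.mul_sum]
  refine Finset.sum_congr rfl fun j hj => ?_
  have hj₁ : j ≤ p₁ := by rw [Finset.mem_range] at hj; omega
  have hj₂ : j ≤ p₂ := by rw [Finset.mem_range] at hj; omega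
  rw [← pow_sub_mul_pow x hj₁, ← pow_sub_mul_pow y hj₂, div_pow, mul_pow]
  field_simp

end Polynomial

open Matrix Polynomial

section Jordan

variable {n : ℕ}

noncomputable def cHomogeneousPoly (m p₁ p₂ : ℕ) (a : ℕ → ℂ) : MvPolynomial (Fin 2 ⊕ Fin m) ℂ :=
  ∑ j ∈ Finset.range (min p₁ p₂ + 1), MvPolynomial.C (a j) *
    MvPolynomial.X (Sum.inl 0) ^ (p₁ - j) * MvPolynomial.X (Sum.inl 1) ^ (p₂ - j) *
      (∑ k, MvPolynomial.X (Sum.inr k) ^ 2 : MvPolynomial (Fin 2 ⊕ Fin m) ℂ) ^ j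

def IsScalingHomogeneous (P : MvPolynomial (Fin 2 ⊕ Fin (n - 2)) ℂ) (p₁ p₂ : ℕ) : Prop :=
  ∀ l₁ l₂ : ℝ, 0 < l₁ → 0 < l₂ → ∀ (y₁ y₂ : ℝ) (y' : Fin (n - 2) → ℝ),
    ev17 P (l₁ * y₁) (l₂ * y₂) (fun k => √(l₁ * l₂) * y' k)
      = (l₁ : ℂ) ^ p₁ * (l₂ : ℂ) ^ p₂ * ev17 P y₁ y₂ y'

def IsRotationInvariant (P : MvPolynomial (Fin 2 ⊕ Fin (n - 2)) ℂ) : Prop :=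
  ∀ m : Matrix (Fin (n - 2)) (Fin (n - 2)) ℝ, mᵀ * m = 1 → m.det = 1 →
    ∀ (y₁ y₂ : ℝ) (y' : Fin (n - 2) → ℝ), ev17 P y₁ y₂ (m *ᵥ y') = ev17 P y₁ y₂ y'

theorem ev17_cHomogeneousPoly {p₁ p₂ : ℕ} (a : ℕ → ℂ) (y₁ y₂ : ℝ) (y' : Fin (n - 2) → ℝ) :
    ev17 (cHomogeneousPoly (n - 2) p₁ p₂ a) y₁ y₂ y' =
      ∑ j ∈ Finset.range (min p₁ p₂ + 1),
        a j * (y₁ : ℂ) ^ (p₁ - j) * (y₂ : ℂ) ^ (p₂ - j) * ((∑ k, y' k ^ 2 : ℝ) : ℂ) ^ j := by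
  simp [ev17, cHomogeneousPoly]

theorem isScalingHomogeneous_cHomogeneousPoly {p₁ p₂ : ℕ} (a : ℕ → ℂ) :
    IsScalingHomogeneous (cHomogeneousPoly (n - 2) p₁ p₂ a) p₁ p₂ := by
  intro l₁ l₂ hl₁ hl₂ y₁ y₂ y'
  have hsum : ∑ k, (√(l₁ * l₂) * y' k) ^ 2 = l₁ * l₂ * ∑ k, y' k ^ 2 := by
    simp_rw [Finset.mul_sum, mul_pow, Real.sq_sqrt (mul_pos hl₁ hl₂).le]
  rw [ev17_cHomogeneousPoly, ev17_cHomogeneousPoly, hsum, Finset.mul_sum (Finset.range _)]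
  refine Finset.sum_congr rfl fun j hj => ?_
  have hj₁ : j ≤ p₁ := by rw [Finset.mem_range] at hj; omega
  have hj₂ : j ≤ p₂ := by rw [Finset.mem_range] at hj; omega
  rw [← pow_sub_mul_pow (l₁ : ℂ) hj₁, ← pow_sub_mul_pow (l₂ : ℂ) hj₂]
  push_cast
  ring

theorem isRotationInvariant_cHomogeneousPoly {p₁ p₂ : ℕ} (a : ℕ → ℂ) :
    IsRotationInvariant (cHomogeneousPoly (n - 2) p₁ p₂ a) := by
  intro m hm _ y₁ y₂ y'
  rw [ev17_cHomogeneousPoly, ev17_cHomogeneousPoly, Matrix.sum_sq_mulVec_of_transpose_mul_self hm]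

theorem eq_of_ev17_eq_ev17_of_pos {P R : MvPolynomial (Fin 2 ⊕ Fin (n - 2)) ℂ}
    (h : ∀ y₁ y₂ : ℝ, 0 < y₁ → 0 < y₂ → ∀ y', ev17 P y₁ y₂ y' = ev17 R y₁ y₂ y') : P = R := by
  refine MvPolynomial.funext_set
    (Sum.elim (fun _ => Complex.ofReal '' Set.Ioi 0) fun _ => Set.range Complex.ofReal) ?_ ?_
  · rintro (_ | _)
    · exact (Set.Ioi_infinite 0).image Complex.ofReal_injective.injOn
    · exact Set.infinite_range_of_injective Complex.ofReal_injective
  · intro x hx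
    obtain ⟨y₁, hy₁, h₁⟩ := hx (Sum.inl 0) trivial
    obtain ⟨y₂, hy₂, h₂⟩ := hx (Sum.inl 1) trivial
    choose y' hy' using fun k => hx (Sum.inr k) trivial
    obtain rfl : x = Sum.elim ![(y₁ : ℂ), y₂] fun k => (y' k : ℂ) := by
      ext (a | k)
      · fin_cases a <;> simp [h₁, h₂]
      · simp [hy']
    exact h y₁ y₂ hy₁ hy₂ y'

theorem exists_polynomial_eval_eq_ev17_left (P : MvPolynomial (Fin 2 ⊕ Fin (n - 2)) ℂ) (y₂ : ℝ)
    (y' : Fin (n - 2) → ℝ) : ∃ A : ℂ[X], ∀ t : ℝ, A.eval (t : ℂ) = ev17 P t y₂ y' := by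
  obtain ⟨A, hA⟩ := MvPolynomial.exists_polynomial_eval_eq_eval_update P
    (Sum.elim ![0, (y₂ : ℂ)] fun k => (y' k : ℂ)) (Sum.inl 0)
  refine ⟨A, fun t => ?_⟩
  rw [hA, ev17]
  congr 2 with (a | k)
  · fin_cases a <;> simp
  · simp

theorem exists_polynomial_eval_eq_ev17_right (P : MvPolynomial (Fin 2 ⊕ Fin (n - 2)) ℂ) (y₁ : ℝ)
    (y' : Fin (n - 2) → ℝ) : ∃ A : ℂ[X], ∀ t : ℝ, A.eval (t : ℂ) = ev17 P y₁ t y' := by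
  obtain ⟨A, hA⟩ := MvPolynomial.exists_polynomial_eval_eq_eval_update P
    (Sum.elim ![(y₁ : ℂ), 0] fun k => (y' k : ℂ)) (Sum.inl 1)
  refine ⟨A, fun t => ?_⟩
  rw [hA, ev17]
  congr 2 with (a | k)
  · fin_cases a <;> simp
  · simp

theorem exists_polynomial_eval_eq_ev17_single (P : MvPolynomial (Fin 2 ⊕ Fin (n - 2)) ℂ)
    (y₁ y₂ : ℝ) (i : Fin (n - 2)) :
    ∃ A : ℂ[X], ∀ t : ℝ, A.eval (t : ℂ) = ev17 P y₁ y₂ (Pi.single i t) := by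
  obtain ⟨A, hA⟩ := MvPolynomial.exists_polynomial_eval_eq_eval_update P
    (Sum.elim ![(y₁ : ℂ), y₂] 0) (Sum.inr i)
  refine ⟨A, fun t => ?_⟩
  rw [hA, ev17]
  congr 2 with (a | k)
  · fin_cases a <;> simp
  · by_cases hk : k = i <;> simp [hk]

theorem exists_ev17_eq_pow_mul_pow_mul_eval {P : MvPolynomial (Fin 2 ⊕ Fin (n - 2)) ℂ}
    {p₁ p₂ : ℕ} (hsc : IsScalingHomogeneous P p₁ p₂) (hrot : IsRotationInvariant P)
    {i j : Fin (n - 2)} (hij : i ≠ j) :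
    ∃ G : ℂ[X], ∀ y₁ y₂ : ℝ, 0 < y₁ → 0 < y₂ → ∀ y' : Fin (n - 2) → ℝ,
      ev17 P y₁ y₂ y' =
        (y₁ : ℂ) ^ p₁ * (y₂ : ℂ) ^ p₂ * G.eval (((∑ k, y' k ^ 2 : ℝ) : ℂ) / (y₁ * y₂)) := by
  have hrad (y₁ y₂ : ℝ) (y' : Fin (n - 2) → ℝ) :
      ev17 P y₁ y₂ y' = ev17 P y₁ y₂ (Pi.single i √(∑ k, y' k ^ 2)) :=
    Matrix.apply_eq_apply_single_of_det_eq_one hij (fun A hA hdet => hrot A hA hdet y₁ y₂) y'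
  have hsq (t : ℝ) : ∑ k, (Pi.single i t : Fin (n - 2) → ℝ) k ^ 2 = t ^ 2 := by
    simp [Pi.single_apply]
  obtain ⟨Q, hQ⟩ := exists_polynomial_eval_eq_ev17_single P 1 1 i
  have hQeven : Q.comp (-X) = Q := by
    refine eq_of_infinite_eval_eq _ _
      ((Set.infinite_range_of_injective Complex.ofReal_injective).mono ?_)
    rintro _ ⟨t, rfl⟩
    rw [Set.mem_ofPred_eq, eval_comp, eval_neg, eval_X, ← Complex.ofReal_neg, hQ, hQ, hrad,
      hsq, neg_sq, ← hsq, ← hrad]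
  have hQG (t : ℝ) : Q.eval (t : ℂ) = (contract 2 Q).eval ((t ^ 2 : ℝ) : ℂ) := by
    rw [Complex.ofReal_pow, ← expand_eval, expand_two_contract_two hQeven]
  refine ⟨contract 2 Q, fun y₁ y₂ hy₁ hy₂ y' => ?_⟩
  have hs : 0 < √(y₁ * y₂) := Real.sqrt_pos.mpr (mul_pos hy₁ hy₂)
  have hscale := hsc y₁ y₂ hy₁ hy₂ 1 1 (fun k => y' k / √(y₁ * y₂))
  simp only [mul_one, mul_div_cancel₀ _ hs.ne'] at hscale
  have hsum : ∑ k, (y' k / √(y₁ * y₂)) ^ 2 = (∑ k, y' k ^ 2) / (y₁ * y₂) := by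
    simp_rw [div_pow, ← Finset.sum_div, Real.sq_sqrt (mul_pos hy₁ hy₂).le]
  rw [hscale, hrad 1 1, ← hQ, hQG, Real.sq_sqrt (by positivity), hsum, Complex.ofReal_div,
    Complex.ofReal_mul]

theorem natDegree_le_of_ev17_eq {P : MvPolynomial (Fin 2 ⊕ Fin (n - 2)) ℂ} {p₁ p₂ : ℕ}
    {G : ℂ[X]} (i : Fin (n - 2))
    (hG : ∀ y₁ y₂ : ℝ, 0 < y₁ → 0 < y₂ → ∀ y' : Fin (n - 2) → ℝ, ev17 P y₁ y₂ y' =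
      (y₁ : ℂ) ^ p₁ * (y₂ : ℂ) ^ p₂ * G.eval (((∑ k, y' k ^ 2 : ℝ) : ℂ) / (y₁ * y₂))) :
    G.natDegree ≤ p₁ ∧ G.natDegree ≤ p₂ := by
  have hpos : (Complex.ofReal '' Set.Ioi 0).Infinite :=
    (Set.Ioi_infinite 0).image Complex.ofReal_injective.injOn
  have hunit : ∑ k, (Pi.single i 1 : Fin (n - 2) → ℝ) k ^ 2 = 1 := by
    simp [Pi.single_apply]
  obtain ⟨A₁, hA₁⟩ := exists_polynomial_eval_eq_ev17_left P 1 (Pi.single i 1)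
  obtain ⟨A₂, hA₂⟩ := exists_polynomial_eval_eq_ev17_right P 1 (Pi.single i 1)
  constructor
  · refine natDegree_le_of_eval_eq_pow_mul_eval_inv (A := A₁) hpos ?_
    rintro _ ⟨t, ht, rfl⟩
    rw [hA₁, hG t 1 ht one_pos, hunit]
    simp
  · refine natDegree_le_of_eval_eq_pow_mul_eval_inv (A := A₂) hpos ?_
    rintro _ ⟨t, ht, rfl⟩
    rw [hA₂, hG 1 t one_pos ht, hunit]
    simp

theorem exists_eq_cHomogeneousPoly {P : MvPolynomial (Fin 2 ⊕ Fin (n - 2)) ℂ} {p₁ p₂ : ℕ}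
    (hsc : IsScalingHomogeneous P p₁ p₂) (hrot : IsRotationInvariant P) {i j : Fin (n - 2)}
    (hij : i ≠ j) : ∃ a, P = cHomogeneousPoly (n - 2) p₁ p₂ a := by
  obtain ⟨G, hG⟩ := exists_ev17_eq_pow_mul_pow_mul_eval hsc hrot hij
  obtain ⟨h₁, h₂⟩ := natDegree_le_of_ev17_eq i hG
  refine ⟨G.coeff, eq_of_ev17_eq_ev17_of_pos fun y₁ y₂ hy₁ hy₂ y' => ?_⟩
  rw [hG y₁ y₂ hy₁ hy₂, ev17_cHomogeneousPoly,
    pow_mul_pow_mul_eval_div_eq_sum h₁ h₂ (by exact_mod_cast hy₁.ne') (by exact_mod_cast hy₂.ne')]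

end Jordan

/-- In `J_n` (`n ≥ 4`) with the CSOI `(c₁,c₂)`, a polynomial `q` is
`c`-homogeneous of multidegree `(p₁,p₂)` — i.e. invariant under `SO(n-2)`
acting on `y'` and satisfying the scaling law
`q(λ₁y₁, λ₂y₂, √(λ₁λ₂) y') = λ₁^{p₁} λ₂^{p₂} q(y)` for `λ₁, λ₂ > 0` — iff
`q(y) = Σ_{j=0}^{min(p₁,p₂)} a_j y₁^{p₁-j} y₂^{p₂-j} |y'|^{2j}`. -/
theorem stmt17 (n : ℕ) (hn : 4 ≤ n) (p₁ p₂ : ℕ)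
    (P : MvPolynomial (Fin 2 ⊕ Fin (n - 2)) ℂ) :
    ((∀ l₁ l₂ : ℝ, 0 < l₁ → 0 < l₂ → ∀ (y₁ y₂ : ℝ) (y' : Fin (n - 2) → ℝ),
        ev17 P (l₁ * y₁) (l₂ * y₂) (fun k => Real.sqrt (l₁ * l₂) * y' k)
          = (l₁ : ℂ) ^ p₁ * (l₂ : ℂ) ^ p₂ * ev17 P y₁ y₂ y') ∧
     (∀ m : Matrix (Fin (n - 2)) (Fin (n - 2)) ℝ,
        m.transpose * m = 1 → m.det = 1 →
        ∀ (y₁ y₂ : ℝ) (y' : Fin (n - 2) → ℝ),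
          ev17 P y₁ y₂ (m.mulVec y') = ev17 P y₁ y₂ y'))
    ↔ ∃ a : ℕ → ℂ, ∀ (y₁ y₂ : ℝ) (y' : Fin (n - 2) → ℝ),
        ev17 P y₁ y₂ y'
          = ∑ j ∈ Finset.range (min p₁ p₂ + 1),
              a j * (y₁ : ℂ) ^ (p₁ - j) * (y₂ : ℂ) ^ (p₂ - j) *
                (((∑ k, (y' k) ^ 2 : ℝ)) : ℂ) ^ j := by
  have hij : (⟨0, by omega⟩ : Fin (n - 2)) ≠ ⟨1, by omega⟩ := by simp
  constructor
  · rintro ⟨hsc, hrot⟩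
    obtain ⟨a, rfl⟩ := exists_eq_cHomogeneousPoly hsc hrot hij
    exact ⟨a, ev17_cHomogeneousPoly a⟩
  · rintro ⟨a, ha⟩
    obtain rfl : P = cHomogeneousPoly (n - 2) p₁ p₂ a :=
      eq_of_ev17_eq_ev17_of_pos fun y₁ y₂ _ _ y' => by rw [ha, ev17_cHomogeneousPoly]
    exact ⟨isScalingHomogeneous_cHomogeneousPoly a, isRotationInvariant_cHomogeneousPoly a⟩
end
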